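/- arXiv:2301.03536 — 3 statements merged into one kernel-verified Lean document; each statement's English description precedes it below -/
import Mathlib

section
/- Let e be a behaviour for the CHSH scenario that decomposes as e = (1−τ)·e' + τ·e'' where 0 ≤ τ ≤ σ ≤ 1, e' is a convex combination of deterministic non-signalling behaviours, and e'' is an arbitrary behaviour. Then S_CHSH(e) ≤ (3 + σ)/4. -/
open Finset

/-- A behaviour for the CHSH scenario. -/
def IsBehaviour (p : Fin 2 → Fin 2 → Fin 2 → Fin 2 → ℝ) : Prop :=
  (∀ a b x y, 0 ≤ p a b x y) ∧
  (∀ x y : Fin 2, ∑ a : Fin 2, ∑ b : Fin 2, p a b x y = 1)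

/-- The deterministic non-signalling behaviour given by local strategies `f, g`. -/
def detBehaviour (f g : Fin 2 → Fin 2) : Fin 2 → Fin 2 → Fin 2 → Fin 2 → ℝ :=
  fun a b x y => if a = f x ∧ b = g y then 1 else 0

/-- A convex combination of deterministic non-signalling behaviours. -/
def IsNoncontextual (p : Fin 2 → Fin 2 → Fin 2 → Fin 2 → ℝ) : Prop :=
  ∃ w : (Fin 2 → Fin 2) → (Fin 2 → Fin 2) → ℝ,
    (∀ f g, 0 ≤ w f g) ∧
    (∑ f : Fin 2 → Fin 2, ∑ g : Fin 2 → Fin 2, w f g = 1) ∧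
    (∀ a b x y, p a b x y =
      ∑ f : Fin 2 → Fin 2, ∑ g : Fin 2 → Fin 2, w f g * detBehaviour f g a b x y)

/-- The CHSH game score with uniform inputs: winning condition `a ⊕ b = x·y`. -/
noncomputable def chshScore (p : Fin 2 → Fin 2 → Fin 2 → Fin 2 → ℝ) : ℝ :=
  (1/4) * ∑ x : Fin 2, ∑ y : Fin 2, ∑ a : Fin 2, ∑ b : Fin 2,
    if a + b = x * y then p a b x y else 0


lemma detBehaviour_score_le (f g : Fin 2 → Fin 2) :
    chshScore (detBehaviour f g) ≤ 3/4 := by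
  have h : ∀ i : Fin 2, i = 0 ∨ i = 1 := by omega
  rcases h (f 0) with h1 | h1 <;> rcases h (f 1) with h2 | h2 <;>
    rcases h (g 0) with h3 | h3 <;> rcases h (g 1) with h4 | h4 <;>
    simp [chshScore, detBehaviour, Fin.sum_univ_two, h1, h2, h3, h4] <;> norm_num

lemma noncontextual_score_le {e' : Fin 2 → Fin 2 → Fin 2 → Fin 2 → ℝ}
    (he' : IsNoncontextual e') : chshScore e' ≤ 3/4 := by
  obtain ⟨w, hw0, hw1, hw⟩ := he'
  have hlin : chshScore e' = ∑ f : Fin 2 → Fin 2, ∑ g : Fin 2 → Fin 2,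
      w f g * chshScore (detBehaviour f g) := by
    simp only [chshScore, hw, Fin.sum_univ_two, mul_add, Finset.sum_add_distrib,
      Finset.mul_sum]
    ring_nf
    simp [Finset.mul_sum, mul_assoc, mul_left_comm, mul_comm]
  calc chshScore e' ≤ ∑ f : Fin 2 → Fin 2, ∑ g : Fin 2 → Fin 2, w f g * (3/4) := by
        rw [hlin]
        refine Finset.sum_le_sum fun f _ => Finset.sum_le_sum fun g _ => ?_
        exact mul_le_mul_of_nonneg_left (detBehaviour_score_le f g) (hw0 f g)
    _ = 3/4 := by simp only [← Finset.sum_mul, hw1, one_mul]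

lemma behaviour_score_le {p : Fin 2 → Fin 2 → Fin 2 → Fin 2 → ℝ}
    (hp : IsBehaviour p) : chshScore p ≤ 1 := by
  obtain ⟨hpos, hsum⟩ := hp
  have h00 := hsum 0 0; have h01 := hsum 0 1
  have h10 := hsum 1 0; have h11 := hsum 1 1
  simp [Fin.sum_univ_two] at h00 h01 h10 h11
  simp [chshScore, Fin.sum_univ_two]
  linarith [hpos 0 1 0 0, hpos 1 0 0 0, hpos 0 1 0 1, hpos 1 0 0 1,
    hpos 0 1 1 0, hpos 1 0 1 0, hpos 0 0 1 1, hpos 1 1 1 1]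

/-- Relaxed classical bound: if `e = (1−τ)·e' + τ·e''` with `e'` non-contextual,
`e''` an arbitrary behaviour and `0 ≤ τ ≤ σ ≤ 1`, then `S_CHSH(e) ≤ (3+σ)/4`. -/
theorem chshScore_relaxed_classical_bound
    (e e' e'' : Fin 2 → Fin 2 → Fin 2 → Fin 2 → ℝ) (τ σ : ℝ)
    (hτ0 : 0 ≤ τ) (hτσ : τ ≤ σ) (hσ1 : σ ≤ 1)
    (he' : IsNoncontextual e') (he'' : IsBehaviour e'')
    (hdecomp : ∀ a b x y, e a b x y = (1 - τ) * e' a b x y + τ * e'' a b x y) :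
    chshScore e ≤ (3 + σ) / 4 := by
  have hA := noncontextual_score_le he'
  have hB := behaviour_score_le he''
  have hlin : chshScore e = (1 - τ) * chshScore e' + τ * chshScore e'' := by
    simp [chshScore, hdecomp, Fin.sum_univ_two]; ring
  rw [hlin]
  nlinarith [hA, hB, hτ0, hτσ, hσ1]
end

section
/- For a Boolean contextual game with uniform input distribution over a set of contexts M and scoring function V that is k-consistent (i.e., max over global assignments s of Σ_{C∈M} V(C, s|_C) equals k), every behaviour e with contextual fraction at most ξ — meaning e = (1−τ)·e^NC + τ·e'' with τ ≤ ξ and e^NC a convex combination of deterministic global-assignment behaviours — satisfies score(e) ≤ (k + ξ(|M| − k))/|M|. -/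
open Finset

variable {Z O : Type*}

/-- Restriction of a global assignment `s : Z → O` to a context `C ⊆ Z`. -/
def restrictTo (s : Z → O) (C : Finset Z) : {z // z ∈ C} → O := fun z => s z.1

/-- The game score with uniform input distribution over the contexts in `M`. -/
noncomputable def gameScore [Fintype O] [DecidableEq Z]
    (M : Finset (Finset Z))
    (V : (C : Finset Z) → ({z // z ∈ C} → O) → ℝ)
    (e : (C : Finset Z) → ({z // z ∈ C} → O) → ℝ) : ℝ :=
  (1 / (M.card : ℝ)) * ∑ C ∈ M, ∑ t : {z // z ∈ C} → O, V C t * e C t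

/-- For a `k`-consistent Boolean contextual game with uniform inputs, any behaviour
`e = (1−τ)·e^NC + τ·e''` with `τ ≤ ξ`, where `e^NC` is a convex combination of
deterministic global-assignment behaviours and `e''` is a behaviour, has score at most
`(k + ξ(|M| − k))/|M|`. -/
theorem relaxed_classical_bound
    [Fintype Z] [DecidableEq Z] [Fintype O] [DecidableEq O]
    (M : Finset (Finset Z)) (hM : M.Nonempty)
    (V : (C : Finset Z) → ({z // z ∈ C} → O) → ℝ)
    (hVbool : ∀ C t, V C t = 0 ∨ V C t = 1)
    (k : ℝ)
    (hk_le : ∀ s : Z → O, ∑ C ∈ M, V C (restrictTo s C) ≤ k)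
    (hk_eq : ∃ s : Z → O, ∑ C ∈ M, V C (restrictTo s C) = k)
    (ξ τ : ℝ) (hτ0 : 0 ≤ τ) (hτξ : τ ≤ ξ) (hξ1 : ξ ≤ 1)
    (w : (Z → O) → ℝ) (hw0 : ∀ s, 0 ≤ w s) (hw1 : ∑ s : Z → O, w s = 1)
    (e'' : (C : Finset Z) → ({z // z ∈ C} → O) → ℝ)
    (he''pos : ∀ C ∈ M, ∀ t, 0 ≤ e'' C t)
    (he''norm : ∀ C ∈ M, ∑ t : {z // z ∈ C} → O, e'' C t = 1)
    (e : (C : Finset Z) → ({z // z ∈ C} → O) → ℝ)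
    (hdecomp : ∀ C t, e C t =
      (1 - τ) * (∑ s : Z → O, w s * (if t = restrictTo s C then 1 else 0)) + τ * e'' C t) :
    gameScore M V e ≤ (k + ξ * ((M.card : ℝ) - k)) / (M.card : ℝ) := by
  have hNpos : (0 : ℝ) < M.card := by exact_mod_cast Finset.card_pos.mpr hM
  have hV0 : ∀ C t, 0 ≤ V C t := by
    intro C t; rcases hVbool C t with h | h <;> simp [h]
  have hV1 : ∀ C t, V C t ≤ 1 := by
    intro C t; rcases hVbool C t with h | h <;> simp [h]
  -- k ≤ |M|
  have hkN : k ≤ (M.card : ℝ) := by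
    obtain ⟨s, hs⟩ := hk_eq
    calc k = ∑ C ∈ M, V C (restrictTo s C) := hs.symm
      _ ≤ ∑ C ∈ M, 1 := Finset.sum_le_sum (fun C _ => hV1 _ _)
      _ = (M.card : ℝ) := by simp
  -- part 1: noncontextual part
  have hNC : ∑ C ∈ M, ∑ t : {z // z ∈ C} → O,
      V C t * (∑ s : Z → O, w s * (if t = restrictTo s C then 1 else 0)) ≤ k := by
    have : ∀ C ∈ M, ∑ t : {z // z ∈ C} → O,
        V C t * (∑ s : Z → O, w s * (if t = restrictTo s C then 1 else 0))
        = ∑ s : Z → O, w s * V C (restrictTo s C) := by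
      intro C _
      simp only [Finset.mul_sum]
      rw [Finset.sum_comm]
      refine Finset.sum_congr rfl (fun s _ => ?_)
      simp [mul_ite, mul_comm, Finset.sum_ite_eq']
    rw [Finset.sum_congr rfl this, Finset.sum_comm]
    calc ∑ s : Z → O, ∑ C ∈ M, w s * V C (restrictTo s C)
        = ∑ s : Z → O, w s * ∑ C ∈ M, V C (restrictTo s C) := by
          simp [Finset.mul_sum]
      _ ≤ ∑ s : Z → O, w s * k := by
          refine Finset.sum_le_sum (fun s _ => mul_le_mul_of_nonneg_left (hk_le s) (hw0 s))
      _ = k := by rw [← Finset.sum_mul, hw1, one_mul]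
  -- part 2: e'' part
  have hB : ∑ C ∈ M, ∑ t : {z // z ∈ C} → O, V C t * e'' C t ≤ (M.card : ℝ) := by
    calc ∑ C ∈ M, ∑ t : {z // z ∈ C} → O, V C t * e'' C t
        ≤ ∑ C ∈ M, ∑ t : {z // z ∈ C} → O, e'' C t := by
          refine Finset.sum_le_sum (fun C hC => ?_)
          refine Finset.sum_le_sum (fun t _ => ?_)
          nlinarith [hV1 C t, hV0 C t, he''pos C hC t]
      _ = ∑ C ∈ M, (1 : ℝ) := Finset.sum_congr rfl (fun C hC => he''norm C hC)
      _ = (M.card : ℝ) := by simp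
  have hτ1 : τ ≤ 1 := hτξ.trans hξ1
  have hsum : ∑ C ∈ M, ∑ t : {z // z ∈ C} → O, V C t * e C t
      ≤ (1 - τ) * k + τ * (M.card : ℝ) := by
    have expand : ∀ C ∈ M, ∑ t : {z // z ∈ C} → O, V C t * e C t
        = (1 - τ) * (∑ t : {z // z ∈ C} → O,
            V C t * (∑ s : Z → O, w s * (if t = restrictTo s C then 1 else 0)))
          + τ * (∑ t : {z // z ∈ C} → O, V C t * e'' C t) := by
      intro C _
      simp only [hdecomp, mul_add, Finset.sum_add_distrib, Finset.mul_sum]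
      congr 1
      · exact Finset.sum_congr rfl fun t _ => Finset.sum_congr rfl fun s _ => by ring
      · exact Finset.sum_congr rfl fun t _ => by ring
    rw [Finset.sum_congr rfl expand, Finset.sum_add_distrib, ← Finset.mul_sum, ← Finset.mul_sum]
    have h1 : (0:ℝ) ≤ 1 - τ := by linarith
    exact add_le_add (mul_le_mul_of_nonneg_left hNC h1)
      (mul_le_mul_of_nonneg_left hB hτ0)
  have hfinal : (1 - τ) * k + τ * (M.card : ℝ) ≤ k + ξ * ((M.card : ℝ) - k) := by
    nlinarith [hkN]
  rw [gameScore, one_div, div_eq_inv_mul]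
  exact mul_le_mul_of_nonneg_left (hsum.trans hfinal) (by positivity)
end

section
/- Let e* be a behaviour maximizing the score over behaviours with SF(e) ≤ σ that are deterministic on a distinguished context C, for an n-party binary-input game. Then S^σ_C := score(e*) satisfies S^σ_C ≤ S_cl^{ξ=σ}, the maximum score over behaviours with contextual fraction at most σ; in particular for the CHSH game, S^σ_C ≤ (3 + σ)/4. -/
open Finset

/-- No-signalling: each party's marginals are independent of the other's input. -/
def IsNS (p : Fin 2 → Fin 2 → Fin 2 → Fin 2 → ℝ) : Prop :=
  (∀ a x y y' : Fin 2, ∑ b : Fin 2, p a b x y = ∑ b : Fin 2, p a b x y') ∧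
  (∀ b y x x' : Fin 2, ∑ a : Fin 2, p a b x y = ∑ a : Fin 2, p a b x' y)

/-- Signalling fraction: 1 minus the maximal non-signalling weight in affine
decompositions of `p`. -/
noncomputable def SF (p : Fin 2 → Fin 2 → Fin 2 → Fin 2 → ℝ) : ℝ :=
  1 - sSup {s : ℝ | s ∈ Set.Icc (0:ℝ) 1 ∧
    ∃ q r : Fin 2 → Fin 2 → Fin 2 → Fin 2 → ℝ,
      IsNS q ∧ IsBehaviour q ∧ IsBehaviour r ∧
      ∀ a b x y, p a b x y = s * q a b x y + (1 - s) * r a b x y}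

/-- Contextual fraction: 1 minus the maximal non-contextual weight in affine
decompositions of `p`. -/
noncomputable def CF (p : Fin 2 → Fin 2 → Fin 2 → Fin 2 → ℝ) : ℝ :=
  1 - sSup {s : ℝ | s ∈ Set.Icc (0:ℝ) 1 ∧
    ∃ q r : Fin 2 → Fin 2 → Fin 2 → Fin 2 → ℝ,
      IsNoncontextual q ∧ IsBehaviour q ∧ IsBehaviour r ∧
      ∀ a b x y, p a b x y = s * q a b x y + (1 - s) * r a b x y}

/-- The relaxed classical score `S_cl^ξ`: supremum of CHSH scores of behaviours with
contextual fraction at most `ξ`. -/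
noncomputable def SclRelaxed (ξ : ℝ) : ℝ :=
  sSup {S : ℝ | ∃ p : Fin 2 → Fin 2 → Fin 2 → Fin 2 → ℝ,
    IsBehaviour p ∧ CF p ≤ ξ ∧ S = chshScore p}

/-! If `e = s • q + (1 - s) • r` with `q` non-signalling and `s > 0`, then `q` is deterministic on
the context `C` because `e` is. A non-signalling box with binary inputs that is deterministic on one
context is local: it is the mixture of deterministic strategies that output the forced outcomes on
`C` and an outcome pair drawn from the opposite context elsewhere. So every non-signalling weight of
`e` is a non-contextual weight, and `CF e ≤ SF e ≤ σ`. Since a deterministic strategy wins CHSH with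
probability at most `3/4`, `score e ≤ (3/4) (1 - CF e) + CF e = (3 + CF e) / 4`. -/

lemma eq_zero_of_sum_eq_one_of_apply_eq_one {ι : Type*} [Fintype ι] {f : ι → ℝ}
    (hf : ∀ i, 0 ≤ f i) (hsum : ∑ i, f i = 1) {i₀ : ι} (hi₀ : f i₀ = 1) {i : ι} (hi : i ≠ i₀) :
    f i = 0 := by
  classical
  have hrest : ∑ j ∈ univ.erase i₀, f j = 0 := by
    linarith [add_sum_erase univ f (mem_univ i₀)]
  exact (sum_eq_zero_iff_of_nonneg (fun j _ => hf j)).1 hrest i (by simp [hi])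

lemma apply_eq_ite_of_sum_eq_zero {α β : Type*} [Fintype α] [Fintype β] [DecidableEq α]
    {p : α → β → ℝ} (hp : ∀ a b, 0 ≤ p a b) {a₀ : α} (hrow : ∀ a ≠ a₀, ∑ b, p a b = 0)
    (a : α) (b : β) : p a b = if a = a₀ then ∑ a', p a' b else 0 := by
  have hzero : ∀ a ≠ a₀, p a b = 0 := fun a ha =>
    (sum_eq_zero_iff_of_nonneg (fun b _ => hp a b)).1 (hrow a ha) b (mem_univ b)
  split_ifs with h
  · subst h
    exact (sum_eq_single a (fun a' _ ha' => hzero a' ha') (by simp)).symm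
  · exact hzero a h

section

variable {p q r : Fin 2 → Fin 2 → Fin 2 → Fin 2 → ℝ} {s : ℝ}

lemma IsBehaviour.le_one (hp : IsBehaviour p) (a b x y : Fin 2) : p a b x y ≤ 1 := by
  rw [← hp.2 x y]
  exact (single_le_sum (fun b _ => hp.1 a b x y) (mem_univ b)).trans
    (single_le_sum (f := fun a => ∑ b, p a b x y)
      (fun a _ => sum_nonneg fun b _ => hp.1 a b x y) (mem_univ a))

lemma IsBehaviour.eq_zero_of_apply_eq_one (hp : IsBehaviour p) {a₀ b₀ x y : Fin 2}
    (h : p a₀ b₀ x y = 1) {a b : Fin 2} (hab : (a, b) ≠ (a₀, b₀)) : p a b x y = 0 :=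
  eq_zero_of_sum_eq_one_of_apply_eq_one (f := fun ab : Fin 2 × Fin 2 => p ab.1 ab.2 x y)
    (fun _ => hp.1 _ _ x y) (by rw [Fintype.sum_prod_type]; exact hp.2 x y) h hab

lemma isBehaviour_detBehaviour (f g : Fin 2 → Fin 2) : IsBehaviour (detBehaviour f g) := by
  refine ⟨fun a b x y => by unfold detBehaviour; split_ifs <;> norm_num, fun x y => ?_⟩
  simp [detBehaviour, ite_and]

lemma chshScore_eq_sum_mul (p : Fin 2 → Fin 2 → Fin 2 → Fin 2 → ℝ) :
    chshScore p = ∑ x, ∑ y, ∑ a, ∑ b, (if a + b = x * y then 1 / 4 else 0) * p a b x y := by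
  simp only [chshScore, mul_sum, ite_mul, zero_mul, mul_ite, mul_zero]

lemma chshScore_mix (h : ∀ a b x y, p a b x y = s * q a b x y + (1 - s) * r a b x y) :
    chshScore p = s * chshScore q + (1 - s) * chshScore r := by
  simp only [chshScore_eq_sum_mul, h, Fin.sum_univ_two]
  ring

lemma chshScore_sum {ι : Type*} [Fintype ι] (w : ι → ℝ)
    (q : ι → Fin 2 → Fin 2 → Fin 2 → Fin 2 → ℝ) :
    chshScore (fun a b x y => ∑ i, w i * q i a b x y) = ∑ i, w i * chshScore (q i) := by
  simp only [chshScore_eq_sum_mul, mul_sum, Fin.sum_univ_two, ← sum_add_distrib]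
  exact sum_congr rfl fun i _ => by ring

lemma chshScore_le_one (hp : IsBehaviour p) : chshScore p ≤ 1 := by
  have hctx : ∀ x y : Fin 2,
      ∑ a, ∑ b, (if a + b = x * y then 1 / 4 else 0) * p a b x y ≤ 1 / 4 := by
    intro x y
    calc ∑ a, ∑ b, (if a + b = x * y then 1 / 4 else 0) * p a b x y
        ≤ ∑ a, ∑ b, 1 / 4 * p a b x y := by
          gcongr with a _ b _
          · exact hp.1 a b x y
          · split_ifs <;> norm_num
      _ = 1 / 4 := by simp only [← mul_sum, hp.2 x y, mul_one]
  calc chshScore p ≤ ∑ x : Fin 2, ∑ y : Fin 2, (1 / 4 : ℝ) := by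
        rw [chshScore_eq_sum_mul]; gcongr with x _ y _; exact hctx x y
    _ = 1 := by norm_num

-- The four winning conditions `f x + g y = x * y` add up to `0 = 1` in `Fin 2`,
-- so a deterministic strategy wins on at most three of the four input pairs.
lemma chshScore_detBehaviour_le (f g : Fin 2 → Fin 2) : chshScore (detBehaviour f g) ≤ 3 / 4 := by
  obtain h0 | h0 := (by omega : f 0 = 0 ∨ f 0 = 1) <;>
  obtain h1 | h1 := (by omega : f 1 = 0 ∨ f 1 = 1) <;>
  obtain k0 | k0 := (by omega : g 0 = 0 ∨ g 0 = 1) <;>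
  obtain k1 | k1 := (by omega : g 1 = 0 ∨ g 1 = 1) <;>
  simp [chshScore, detBehaviour, Fin.sum_univ_two, h0, h1, k0, k1] <;> norm_num

lemma IsNoncontextual.of_mixture {ι : Type*} [Fintype ι] (w : ι → ℝ) (f g : ι → Fin 2 → Fin 2)
    (hw0 : ∀ i, 0 ≤ w i) (hw1 : ∑ i, w i = 1)
    (hp : ∀ a b x y, p a b x y = ∑ i, w i * detBehaviour (f i) (g i) a b x y) :
    IsNoncontextual p := by
  classical
  let W : (Fin 2 → Fin 2) → (Fin 2 → Fin 2) → ℝ := fun f' g' =>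
    ∑ i, if f i = f' ∧ g i = g' then w i else 0
  have hW : ∀ F : (Fin 2 → Fin 2) → (Fin 2 → Fin 2) → ℝ,
      ∑ f', ∑ g', W f' g' * F f' g' = ∑ i, w i * F (f i) (g i) := fun F => by
    simp only [W, sum_mul, ite_mul, zero_mul]
    rw [sum_congr rfl fun _ _ => sum_comm, sum_comm]
    simp [ite_and]
  refine ⟨W, fun f' g' => sum_nonneg fun i _ => by split_ifs <;> simp [hw0], ?_,
    fun a b x y => by rw [hp, hW]⟩
  simpa [hw1] using hW fun _ _ => 1

lemma IsNoncontextual.chshScore_le (hp : IsNoncontextual p) : chshScore p ≤ 3 / 4 := by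
  obtain ⟨w, hw0, hw1, hwp⟩ := hp
  have hp : p = fun a b x y => ∑ fg : (Fin 2 → Fin 2) × (Fin 2 → Fin 2),
      w fg.1 fg.2 * detBehaviour fg.1 fg.2 a b x y := by
    funext a b x y; rw [hwp, Fintype.sum_prod_type]
  rw [hp, chshScore_sum]
  calc ∑ fg : (Fin 2 → Fin 2) × (Fin 2 → Fin 2), w fg.1 fg.2 * chshScore (detBehaviour fg.1 fg.2)
      ≤ ∑ fg : (Fin 2 → Fin 2) × (Fin 2 → Fin 2), w fg.1 fg.2 * (3 / 4) := by
        gcongr with fg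
        · exact hw0 _ _
        · exact chshScore_detBehaviour_le _ _
    _ = 3 / 4 := by rw [← sum_mul, Fintype.sum_prod_type, hw1, one_mul]

lemma isNoncontextual_detBehaviour (f g : Fin 2 → Fin 2) : IsNoncontextual (detBehaviour f g) :=
  .of_mixture (fun _ : Unit => 1) (fun _ => f) (fun _ => g) (fun _ => zero_le_one) (by simp)
    (by simp)

theorem IsNS.isNoncontextual_of_apply_eq_one (hns : IsNS q) (hq : IsBehaviour q)
    {a₀ b₀ x₀ y₀ : Fin 2} (h : q a₀ b₀ x₀ y₀ = 1) : IsNoncontextual q := by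
  have hrow : ∀ y, ∀ a ≠ a₀, ∑ b, q a b x₀ y = 0 := fun y a ha => by
    rw [hns.1 a x₀ y y₀]
    exact sum_eq_zero fun b _ => hq.eq_zero_of_apply_eq_one h (by simp [ha])
  have hcol : ∀ x, ∀ b ≠ b₀, ∑ a, q a b x y₀ = 0 := fun x b hb => by
    rw [hns.2 b y₀ x x₀]
    exact sum_eq_zero fun a _ => hq.eq_zero_of_apply_eq_one h (by simp [hb])
  have hx : x₀ + 1 ≠ x₀ := by omega
  have hy : y₀ + 1 ≠ y₀ := by omega
  -- Hidden variable: the outcome pair on the opposite context `(x₀ + 1, y₀ + 1)`, drawn from `q`;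
  -- on inputs `x₀` and `y₀` the outcomes `a₀` and `b₀` are forced.
  refine .of_mixture (fun ab : Fin 2 × Fin 2 => q ab.1 ab.2 (x₀ + 1) (y₀ + 1))
    (fun ab x => if x = x₀ then a₀ else ab.1) (fun ab y => if y = y₀ then b₀ else ab.2)
    (fun _ => hq.1 _ _ _ _) (by rw [Fintype.sum_prod_type]; exact hq.2 _ _) fun a b x y => ?_
  rw [Fintype.sum_prod_type]
  obtain hxc | hxc : x = x₀ ∨ x = x₀ + 1 := by omega
  all_goals obtain hyc | hyc : y = y₀ ∨ y = y₀ + 1 := by omega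
  all_goals subst x y
  all_goals simp only [detBehaviour, hx, hy, ↓reduceIte, ite_and, mul_ite, mul_one, mul_zero,
    sum_ite_irrel, sum_ite_eq, mem_univ, sum_const_zero]
  · rw [hq.2]
    by_cases hab : (a, b) = (a₀, b₀)
    · obtain ⟨rfl, rfl⟩ := Prod.mk.inj hab
      simp [h]
    · rw [hq.eq_zero_of_apply_eq_one h hab, ← ite_and,
        if_neg (show ¬(a = a₀ ∧ b = b₀) by simpa using hab)]
  · rw [← hns.2 b (y₀ + 1) x₀ (x₀ + 1)]
    exact apply_eq_ite_of_sum_eq_zero (fun a b => hq.1 a b _ _) (hrow _) a b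
  · rw [← hns.1 a (x₀ + 1) y₀ (y₀ + 1)]
    exact apply_eq_ite_of_sum_eq_zero (p := fun b a => q a b (x₀ + 1) y₀)
      (fun b a => hq.1 a b _ _) (hcol _) b a

def decompositionWeights (P : (Fin 2 → Fin 2 → Fin 2 → Fin 2 → ℝ) → Prop)
    (p : Fin 2 → Fin 2 → Fin 2 → Fin 2 → ℝ) : Set ℝ :=
  {s | s ∈ Set.Icc (0 : ℝ) 1 ∧ ∃ q r : Fin 2 → Fin 2 → Fin 2 → Fin 2 → ℝ,
    P q ∧ IsBehaviour q ∧ IsBehaviour r ∧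
      ∀ a b x y, p a b x y = s * q a b x y + (1 - s) * r a b x y}

variable {P : (Fin 2 → Fin 2 → Fin 2 → Fin 2 → ℝ) → Prop} {ξ : ℝ}

lemma SF_eq (p : Fin 2 → Fin 2 → Fin 2 → Fin 2 → ℝ) :
    SF p = 1 - sSup (decompositionWeights IsNS p) :=
  rfl

lemma CF_eq (p : Fin 2 → Fin 2 → Fin 2 → Fin 2 → ℝ) :
    CF p = 1 - sSup (decompositionWeights IsNoncontextual p) :=
  rfl

lemma bddAbove_decompositionWeights : BddAbove (decompositionWeights P p) :=
  ⟨1, fun _ hs => hs.1.2⟩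

lemma zero_mem_decompositionWeights (hp : IsBehaviour p) (hPq : P q) (hq : IsBehaviour q) :
    0 ∈ decompositionWeights P p :=
  ⟨⟨le_rfl, zero_le_one⟩, q, p, hPq, hq, hp, fun _ _ _ _ => by ring⟩

lemma IsBehaviour.apply_eq_one_of_mix (hq : IsBehaviour q) (hr : IsBehaviour r) (hs0 : 0 < s)
    (hs1 : s ≤ 1) (hmix : ∀ a b x y, p a b x y = s * q a b x y + (1 - s) * r a b x y)
    {a b x y : Fin 2} (h : p a b x y = 1) : q a b x y = 1 := by
  rw [hmix] at h
  nlinarith [hq.le_one a b x y, mul_le_mul_of_nonneg_left (hr.le_one a b x y) (sub_nonneg.2 hs1)]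

theorem CF_le_SF_of_apply_eq_one (hp : IsBehaviour p) {a₀ b₀ x₀ y₀ : Fin 2}
    (h : p a₀ b₀ x₀ y₀ = 1) : CF p ≤ SF p := by
  have h0 : 0 ∈ decompositionWeights IsNoncontextual p :=
    zero_mem_decompositionWeights hp (isNoncontextual_detBehaviour 0 0)
      (isBehaviour_detBehaviour 0 0)
  suffices sSup (decompositionWeights IsNS p) ≤ sSup (decompositionWeights IsNoncontextual p) by
    rw [SF_eq, CF_eq]; linarith
  refine Real.sSup_le (fun s hs => le_csSup bddAbove_decompositionWeights ?_)
    (le_csSup bddAbove_decompositionWeights h0)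
  obtain ⟨hs01, q, r, hns, hq, hr, hmix⟩ := hs
  rcases hs01.1.eq_or_lt with rfl | hs0
  · exact h0
  · have hq1 := hq.apply_eq_one_of_mix hr hs0 hs01.2 hmix h
    exact ⟨hs01, q, r, hns.isNoncontextual_of_apply_eq_one hq hq1, hq, hr, hmix⟩

theorem chshScore_le_of_CF (hp : IsBehaviour p) : chshScore p ≤ (3 + CF p) / 4 := by
  suffices sSup (decompositionWeights IsNoncontextual p) ≤ 4 - 4 * chshScore p by
    rw [CF_eq]; linarith
  refine Real.sSup_le (fun s ⟨⟨hs0, hs1⟩, q, r, hnc, hq, hr, hmix⟩ => ?_)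
    (by linarith [chshScore_le_one hp])
  rw [chshScore_mix hmix]
  nlinarith [hnc.chshScore_le, chshScore_le_one hr]

lemma chshScore_le_SclRelaxed (hp : IsBehaviour p) (h : CF p ≤ ξ) : chshScore p ≤ SclRelaxed ξ :=
  le_csSup ⟨1, by rintro _ ⟨q, hq, -, rfl⟩; exact chshScore_le_one hq⟩ ⟨p, hp, h, rfl⟩

end

theorem distinguished_context_score_le_general
    (σ : ℝ) (C : Fin 2 × Fin 2)
    (estar : Fin 2 → Fin 2 → Fin 2 → Fin 2 → ℝ)
    (hB : IsBehaviour estar)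
    (hdet : ∃ a b : Fin 2, estar a b C.1 C.2 = 1)
    (hSF : SF estar ≤ σ) :
    chshScore estar ≤ SclRelaxed σ ∧ chshScore estar ≤ (3 + σ) / 4 := by
  obtain ⟨a, b, hdet⟩ := hdet
  have hCF : CF estar ≤ σ := (CF_le_SF_of_apply_eq_one hB hdet).trans hSF
  exact ⟨chshScore_le_SclRelaxed hB hCF, (chshScore_le_of_CF hB).trans (by linarith)⟩

/-- If `e*` maximizes the CHSH score among behaviours with signalling fraction at most
`σ` that are deterministic on the distinguished context `C`, then
`S^σ_C = score(e*) ≤ S_cl^{ξ=σ}`, and in particular `S^σ_C ≤ (3+σ)/4`. -/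
theorem distinguished_context_score_le
    (σ : ℝ) (hσ0 : 0 ≤ σ) (hσ1 : σ ≤ 1) (C : Fin 2 × Fin 2)
    (estar : Fin 2 → Fin 2 → Fin 2 → Fin 2 → ℝ)
    (hB : IsBehaviour estar)
    (hdet : ∃ a b : Fin 2, estar a b C.1 C.2 = 1)
    (hSF : SF estar ≤ σ)
    (hmax : ∀ p : Fin 2 → Fin 2 → Fin 2 → Fin 2 → ℝ,
      IsBehaviour p → (∃ a b : Fin 2, p a b C.1 C.2 = 1) → SF p ≤ σ →
        chshScore p ≤ chshScore estar) :
    chshScore estar ≤ SclRelaxed σ ∧ chshScore estar ≤ (3 + σ) / 4 :=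
  distinguished_context_score_le_general σ C estar hB hdet hSF
end
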